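/- arXiv:2409.20279 — 4 statements merged into one kernel-verified Lean document; each statement's English description precedes it below -/
import Mathlib

section
/- Let d1 > 0 and let w : [0, L] → ℝ be a twice continuously differentiable function satisfying -d1 w''(x) + w(x)(1 - w(x)) = 0 on (0, L), w(0) = w(L) = 0, and 0 ≤ w(x) ≤ 1 on [0, L]. Then w ≡ 0 on [0, L]. -/
open Set

/-- The only solution of `-d1 w'' + w (1 - w) = 0` with zero Dirichlet data and
`0 ≤ w ≤ 1` is `w ≡ 0`. -/
theorem dirichlet_zero_solution_trivial
    (L d1 : ℝ) (hL : 0 < L) (hd1 : 0 < d1) (w : ℝ → ℝ)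
    (hw : ContDiff ℝ 2 w)
    (heq : ∀ x ∈ Ioo (0 : ℝ) L, -d1 * deriv (deriv w) x + w x * (1 - w x) = 0)
    (hb0 : w 0 = 0) (hbL : w L = 0)
    (hbound : ∀ x ∈ Icc (0 : ℝ) L, 0 ≤ w x ∧ w x ≤ 1) :
    ∀ x ∈ Icc (0 : ℝ) L, w x = 0 := by
  have hdiff : Differentiable ℝ w := hw.differentiable (by norm_num)
  have hdiff' : Differentiable ℝ (deriv w) :=
    (hw.iterate_deriv' 1 1).differentiable (by norm_num)
  have hconv : ConvexOn ℝ (Icc (0 : ℝ) L) w := by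
    apply convexOn_of_deriv2_nonneg (convex_Icc 0 L) hdiff.continuous.continuousOn
      hdiff.differentiableOn hdiff'.differentiableOn
    intro x hx
    rw [interior_Icc] at hx
    have h := heq x hx
    have hb := hbound x (Ioo_subset_Icc_self hx)
    have : deriv (deriv w) x = w x * (1 - w x) / d1 := by
      field_simp at h ⊢; linarith
    simp only [Function.iterate_succ, Function.iterate_zero, Function.comp_apply, id]
    rw [this]
    exact div_nonneg (mul_nonneg hb.1 (by linarith [hb.2])) hd1.le
  intro x hx
  have hge := (hbound x hx).1
  rcases hx with ⟨hx0, hxL⟩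
  -- x = (1 - t) • 0 + t • L
  set t := x / L with ht
  have ht0 : 0 ≤ t := div_nonneg hx0 hL.le
  have ht1 : t ≤ 1 := (div_le_one hL).2 hxL
  have hxe : (1 - t) • (0 : ℝ) + t • L = x := by
    simp [ht, div_mul_cancel₀ _ hL.ne']
  have := hconv.2 (left_mem_Icc.2 hL.le) (right_mem_Icc.2 hL.le)
    (by linarith : (0:ℝ) ≤ 1 - t) ht0 (by ring)
  rw [hxe, hb0, hbL] at this
  simp at this
  linarith
end

section
/- Let L > 0, d2 > 0, a > 0 with L ≤ sqrt(d2/a)·π, and let (u, v) be a pair of twice continuously differentiable nonnegative functions on [0, L] satisfying d2 v''(x) + v(x)(a - v(x) - k2 u(x)) = 0 on (0, L) with v(0) = v(L) = 0, where k2 ≥ 0. Then v ≡ 0 on [0, L]. -/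
/-!
Test the equation against the principal Dirichlet eigenfunction `φ x = sin (π x / L)` of
`-d²/dx²` on `(0, L)`, whose eigenvalue is `(π / L) ^ 2`. Integrating by parts twice (all boundary
terms vanish) turns `∫ φ v''` into `-(π / L) ^ 2 ∫ φ v`, so that
`∫ φ v (d2 (π / L) ^ 2 - a + v + k2 u) = 0`. The hypothesis on `L` says `d2 (π / L) ^ 2 ≥ a`,
so this integrand is nonnegative and continuous, hence vanishes; since `φ > 0` inside the
interval, this forces `v = 0` there, and by continuity on all of `[0, L]`.
-/

open Real Set MeasureTheory intervalIntegral

theorem integral_mul_deriv_deriv_eq_deriv_deriv_mul {φ v : ℝ → ℝ} {a b : ℝ}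
    (hφ : ContDiff ℝ 2 φ) (hv : ContDiff ℝ 2 v)
    (hφa : φ a = 0) (hφb : φ b = 0) (hva : v a = 0) (hvb : v b = 0) :
    ∫ x in a..b, φ x * deriv (deriv v) x = ∫ x in a..b, deriv (deriv φ) x * v x := by
  have hφv := integral_mul_deriv_eq_deriv_mul (a := a) (b := b)
    (fun x _ => (hφ.differentiable two_ne_zero x).hasDerivAt)
    (fun x _ => (hv.differentiable_deriv_two x).hasDerivAt)
    ((hφ.continuous_deriv one_le_two).intervalIntegrable a b)
    (hv.deriv'.continuous_deriv_one.intervalIntegrable a b)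
  have hvφ := integral_mul_deriv_eq_deriv_mul (a := a) (b := b)
    (fun x _ => (hv.differentiable two_ne_zero x).hasDerivAt)
    (fun x _ => (hφ.differentiable_deriv_two x).hasDerivAt)
    ((hv.continuous_deriv one_le_two).intervalIntegrable a b)
    (hφ.deriv'.continuous_deriv_one.intervalIntegrable a b)
  simp only [hφa, hφb, hva, hvb, zero_mul, sub_zero, zero_sub] at hφv hvφ
  simp_rw [mul_comm (deriv (deriv φ) _), mul_comm (deriv v _)] at *
  rw [hφv, hvφ]

theorem deriv_deriv_sin_mul (c : ℝ) :
    deriv (deriv fun x => sin (c * x)) = fun x => -c ^ 2 * sin (c * x) := by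
  have hsin (x : ℝ) : HasDerivAt (fun x => sin (c * x)) (cos (c * x) * c) x := by
    simpa using ((hasDerivAt_id x).const_mul c).sin
  have hcos (x : ℝ) : HasDerivAt (fun x => cos (c * x) * c) (-sin (c * x) * c * c) x := by
    simpa using (((hasDerivAt_id x).const_mul c).cos).mul_const c
  funext x
  rw [funext fun y => (hsin y).deriv, (hcos x).deriv]
  ring

theorem eqOn_zero_of_integral_eq_zero_of_nonneg {f : ℝ → ℝ} {a b : ℝ} (hab : a ≤ b)
    (hf : ContinuousOn f (Icc a b)) (hnn : ∀ x ∈ Ioc a b, 0 ≤ f x)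
    (h : ∫ x in a..b, f x = 0) : EqOn f 0 (Ioc a b) := by
  have hnn' : 0 ≤ᵐ[volume.restrict (Ioc a b)] f :=
    (ae_restrict_iff' measurableSet_Ioc).2 (Filter.Eventually.of_forall hnn)
  have hae := (integral_eq_zero_iff_of_le_of_nonneg_ae hab hnn'
    (hf.intervalIntegrable_of_Icc hab)).1 h
  exact Measure.eqOn_Ioc_of_ae_eq (μ := volume) hae (hf.mono Ioc_subset_Icc_self)
    continuousOn_const

theorem le_mul_div_sq_of_le_sqrt_div_mul {a d L c : ℝ} (ha : 0 < a) (hL : 0 < L) (hc : 0 < c)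
    (h : L ≤ √(d / a) * c) : a ≤ d * (c / L) ^ 2 := by
  have h1 : (L / c) ^ 2 ≤ d / a :=
    (Real.le_sqrt' (by positivity)).1 ((div_le_iff₀ hc).2 h)
  rw [div_pow, div_le_div_iff₀ (by positivity) ha] at h1
  rw [div_pow, mul_div_assoc', le_div_iff₀ (by positivity)]
  linarith

theorem sin_pi_div_mul_pos {L x : ℝ} (hx : x ∈ Ioo 0 L) : 0 < sin (π / L * x) := by
  have hL : 0 < L := hx.1.trans hx.2
  refine sin_pos_of_pos_of_lt_pi (by have := hx.1; positivity) ?_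
  rw [div_mul_eq_mul_div, div_lt_iff₀ hL]
  exact mul_lt_mul_of_pos_left hx.2 pi_pos

theorem sin_pi_div_mul_nonneg {L x : ℝ} (hL : 0 < L) (hx : x ∈ Icc 0 L) :
    0 ≤ sin (π / L * x) := by
  refine sin_nonneg_of_nonneg_of_le_pi (by have := hx.1; positivity) ?_
  rw [div_mul_eq_mul_div, div_le_iff₀ hL]
  exact mul_le_mul_of_nonneg_left hx.2 pi_pos.le

theorem integral_sin_mul_eq_zero_of_solution {L d a k : ℝ} {u v : ℝ → ℝ} (hL : 0 < L)
    (hv : ContDiff ℝ 2 v) (hv0 : v 0 = 0) (hvL : v L = 0)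
    (heq : ∀ x ∈ Icc 0 L, d * deriv (deriv v) x + v x * (a - v x - k * u x) = 0) :
    ∫ x in 0..L, sin (π / L * x) * v x * (d * (π / L) ^ 2 - a + v x + k * u x) = 0 := by
  set φ : ℝ → ℝ := fun x => sin (π / L * x)
  have hgreen := integral_mul_deriv_deriv_eq_deriv_deriv_mul (a := 0) (b := L)
    (φ := φ) (by fun_prop) hv (by simp [φ]) (by simp [φ, div_mul_cancel₀ _ hL.ne']) hv0 hvL
  calc ∫ x in 0..L, φ x * v x * (d * (π / L) ^ 2 - a + v x + k * u x)
      = ∫ x in 0..L, d * (φ x * deriv (deriv v) x - deriv (deriv φ) x * v x) := by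
        refine integral_congr fun x hx => ?_
        rw [uIcc_of_le hL.le] at hx
        simp only [φ, deriv_deriv_sin_mul]
        linear_combination (-sin (π / L * x)) * heq x hx
    _ = 0 := by
      rw [intervalIntegral.integral_const_mul, intervalIntegral.integral_sub, hgreen, sub_self,
        mul_zero]
      all_goals exact Continuous.intervalIntegrable (by fun_prop) _ _

theorem small_domain_forces_v_zero_general
    (L d2 a k2 : ℝ) (hL : 0 < L) (ha : 0 < a) (hk2 : 0 ≤ k2)
    (hLle : L ≤ Real.sqrt (d2 / a) * π)
    (u v : ℝ → ℝ) (hu : ContDiff ℝ 2 u) (hv : ContDiff ℝ 2 v)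
    (hu0 : ∀ x ∈ Icc (0 : ℝ) L, 0 ≤ u x) (hv0 : ∀ x ∈ Icc (0 : ℝ) L, 0 ≤ v x)
    (heq : ∀ x ∈ Ioo (0 : ℝ) L,
      d2 * deriv (deriv v) x + v x * (a - v x - k2 * u x) = 0)
    (hb0 : v 0 = 0) (hbL : v L = 0) :
    ∀ x ∈ Icc (0 : ℝ) L, v x = 0 := by
  have heigen : a ≤ d2 * (π / L) ^ 2 := le_mul_div_sq_of_le_sqrt_div_mul ha hL pi_pos hLle
  have heq_Icc : EqOn (fun x => d2 * deriv (deriv v) x + v x * (a - v x - k2 * u x)) 0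
      (Icc 0 L) := by
    rw [← closure_Ioo hL.ne]
    exact EqOn.closure heq (by fun_prop) continuous_const
  set g : ℝ → ℝ := fun x => sin (π / L * x) * v x * (d2 * (π / L) ^ 2 - a + v x + k2 * u x)
  have hv_le : ∀ x ∈ Icc 0 L, v x ≤ d2 * (π / L) ^ 2 - a + v x + k2 * u x := fun x hx => by
    nlinarith [hu0 x hx]
  have hg_zero : EqOn g 0 (Ioc 0 L) := by
    have hu_cont := hu.continuous
    have hv_cont := hv.continuous
    refine eqOn_zero_of_integral_eq_zero_of_nonneg hL.le (by fun_prop) (fun x hx => ?_)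
      (integral_sin_mul_eq_zero_of_solution hL hv hb0 hbL heq_Icc)
    have hx' := Ioc_subset_Icc_self hx
    exact mul_nonneg (mul_nonneg (sin_pi_div_mul_nonneg hL hx') (hv0 x hx'))
      ((hv0 x hx').trans (hv_le x hx'))
  have hv_Ioo : EqOn v 0 (Ioo 0 L) := fun x hx => by
    have hx' := Ioo_subset_Icc_self hx
    rcases mul_eq_zero.1 (hg_zero (Ioo_subset_Ioc_self hx)) with h | h
    · exact (mul_eq_zero.1 h).resolve_left (sin_pi_div_mul_pos hx).ne'
    · exact le_antisymm ((hv_le x hx').trans h.le) (hv0 x hx')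
  rw [← closure_Ioo hL.ne]
  exact hv_Ioo.closure hv.continuous continuous_const

/-- If `L ≤ sqrt (d2 / a) * π`, any nonnegative Dirichlet solution of
`d2 v'' + v (a - v - k2 u) = 0` vanishes identically. -/
theorem small_domain_forces_v_zero
    (L d2 a k2 : ℝ) (hL : 0 < L) (hd2 : 0 < d2) (ha : 0 < a) (hk2 : 0 ≤ k2)
    (hLle : L ≤ Real.sqrt (d2 / a) * π)
    (u v : ℝ → ℝ) (hu : ContDiff ℝ 2 u) (hv : ContDiff ℝ 2 v)
    (hu0 : ∀ x ∈ Icc (0 : ℝ) L, 0 ≤ u x) (hv0 : ∀ x ∈ Icc (0 : ℝ) L, 0 ≤ v x)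
    (heq : ∀ x ∈ Ioo (0 : ℝ) L,
      d2 * deriv (deriv v) x + v x * (a - v x - k2 * u x) = 0)
    (hb0 : v 0 = 0) (hbL : v L = 0) :
    ∀ x ∈ Icc (0 : ℝ) L, v x = 0 :=
  small_domain_forces_v_zero_general L d2 a k2 hL ha hk2 hLle u v hu hv hu0 hv0 heq hb0 hbL
end

section
/- Let a < 1/k1 with k1 > 0 and d1 > 0, and L > sqrt(d1/(1 - a·k1))·π. Set η = 1 - k1·a - d1·π²/L² and φ(x) = sin(πx/L). Then η > 0 and the function u̲(x) = η·φ(x) satisfies d1 u̲''(x) + u̲(x)(1 - u̲(x) - k1·a) ≥ 0 for all x ∈ (0, L), with u̲(0) = u̲(L) = 0 and 0 < u̲(x) ≤ 1 - k1·a on (0, L). -/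
open Real Set

/-! With `ω = π / L`, `u = η sin (ω x)` solves `d u'' = -d ω² u`, and the choice `η = r - d ω²`,
`r = 1 - k₁ a`, makes the residual `d u'' + u (r - u)` collapse to `η² sin (ω x) (1 - sin (ω x))`,
which is nonnegative on `(0, L)`. The hypothesis on `L` is exactly `d ω² < r`, i.e. `η > 0`. -/

lemma deriv_const_mul_sin_mul (c ω : ℝ) :
    deriv (fun y => c * sin (ω * y)) = fun y => c * ω * cos (ω * y) := by
  funext y
  convert (((hasDerivAt_id' y).const_mul ω).sin.const_mul c).deriv using 1
  ring

lemma deriv_deriv_const_mul_sin_mul (c ω x : ℝ) :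
    deriv (deriv fun y => c * sin (ω * y)) x = -(c * ω ^ 2 * sin (ω * x)) := by
  rw [deriv_const_mul_sin_mul]
  convert (((hasDerivAt_id' x).const_mul ω).cos.const_mul (c * ω)).deriv using 1
  ring

lemma logistic_residual_nonneg_of_sine_mode (d r ω s : ℝ) (hs₀ : 0 ≤ s) (hs₁ : s ≤ 1) :
    0 ≤ d * -((r - d * ω ^ 2) * ω ^ 2 * s) + (r - d * ω ^ 2) * s * (r - (r - d * ω ^ 2) * s) := by
  have hfactor : d * -((r - d * ω ^ 2) * ω ^ 2 * s) + (r - d * ω ^ 2) * s * (r - (r - d * ω ^ 2) * s)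
      = (r - d * ω ^ 2) ^ 2 * s * (1 - s) := by ring
  rw [hfactor]
  exact mul_nonneg (mul_nonneg (sq_nonneg _) hs₀) (sub_nonneg.mpr hs₁)

lemma mul_sq_div_sq_lt_of_sqrt_div_mul_lt {d r p L : ℝ} (hd : 0 ≤ d) (hr : 0 < r) (hp : 0 ≤ p)
    (hL : √(d / r) * p < L) : d * p ^ 2 / L ^ 2 < r := by
  have hsq : d / r * p ^ 2 < L ^ 2 := by
    calc d / r * p ^ 2 = (√(d / r) * p) ^ 2 := by
          rw [mul_pow, sq_sqrt (div_nonneg hd hr.le)]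
      _ < L ^ 2 := pow_lt_pow_left₀ hL (by positivity) two_ne_zero
  have hL₀ : 0 < L := (by positivity : 0 ≤ √(d / r) * p).trans_lt hL
  rw [div_lt_iff₀ (by positivity)]
  calc d * p ^ 2 = d / r * p ^ 2 * r := by field_simp
    _ < L ^ 2 * r := by gcongr
    _ = r * L ^ 2 := mul_comm _ _

lemma sin_pi_mul_div_pos {x L : ℝ} (hx : x ∈ Ioo 0 L) : 0 < sin (π * x / L) := by
  have hL : 0 < L := hx.1.trans hx.2
  apply sin_pos_of_pos_of_lt_pi (by have := hx.1; positivity)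
  rw [div_lt_iff₀ hL]
  exact mul_lt_mul_of_pos_left hx.2 pi_pos

theorem subsolution_u_barrier_general
    (L d1 a k1 : ℝ) (hd1 : 0 < d1) (hk1 : 0 < k1)
    (hak1 : a < 1 / k1)
    (hLgt : L > Real.sqrt (d1 / (1 - a * k1)) * π) :
    0 < 1 - k1 * a - d1 * π ^ 2 / L ^ 2 ∧
    (∀ x ∈ Ioo (0 : ℝ) L,
      d1 * deriv (deriv (fun y : ℝ =>
          (1 - k1 * a - d1 * π ^ 2 / L ^ 2) * Real.sin (π * y / L))) x
        + ((1 - k1 * a - d1 * π ^ 2 / L ^ 2) * Real.sin (π * x / L)) *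
            (1 - (1 - k1 * a - d1 * π ^ 2 / L ^ 2) * Real.sin (π * x / L) - k1 * a) ≥ 0) ∧
    (1 - k1 * a - d1 * π ^ 2 / L ^ 2) * Real.sin (π * 0 / L) = 0 ∧
    (1 - k1 * a - d1 * π ^ 2 / L ^ 2) * Real.sin (π * L / L) = 0 ∧
    (∀ x ∈ Ioo (0 : ℝ) L,
      0 < (1 - k1 * a - d1 * π ^ 2 / L ^ 2) * Real.sin (π * x / L) ∧
      (1 - k1 * a - d1 * π ^ 2 / L ^ 2) * Real.sin (π * x / L) ≤ 1 - k1 * a) := by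
  have hak : 0 < 1 - a * k1 := sub_pos.mpr ((lt_div_iff₀ hk1).mp hak1)
  have hL : 0 < L := (by positivity : 0 ≤ √(d1 / (1 - a * k1)) * π).trans_lt hLgt
  have hη : 0 < 1 - k1 * a - d1 * π ^ 2 / L ^ 2 := by
    have := mul_sq_div_sq_lt_of_sqrt_div_mul_lt hd1.le hak pi_pos.le hLgt
    linarith
  refine ⟨hη, fun x hx => ?_, by simp, by simp [mul_div_assoc, hL.ne'], fun x hx =>
    ⟨mul_pos hη (sin_pi_mul_div_pos hx), ?_⟩⟩
  · have hu'' : deriv (deriv fun y => (1 - k1 * a - d1 * π ^ 2 / L ^ 2) * sin (π * y / L)) x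
        = -((1 - k1 * a - d1 * π ^ 2 / L ^ 2) * (π / L) ^ 2 * sin (π * x / L)) := by
      simp_rw [mul_div_right_comm π]
      exact deriv_deriv_const_mul_sin_mul _ _ x
    rw [hu'']
    have := logistic_residual_nonneg_of_sine_mode d1 (1 - k1 * a) (π / L) _
      (sin_pi_mul_div_pos hx).le (sin_le_one _)
    linear_combination this
  · calc _ ≤ 1 - k1 * a - d1 * π ^ 2 / L ^ 2 := mul_le_of_le_one_right hη.le (sin_le_one _)
      _ ≤ 1 - k1 * a := sub_le_self _ (by positivity)

/-- Sub-solution inequality for `u̲ = η sin (π x / L)` in the barrier construction. -/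
theorem subsolution_u_barrier
    (L d1 a k1 : ℝ) (hd1 : 0 < d1) (ha : 0 < a) (hk1 : 0 < k1)
    (hak1 : a < 1 / k1)
    (hLgt : L > Real.sqrt (d1 / (1 - a * k1)) * π) :
    0 < 1 - k1 * a - d1 * π ^ 2 / L ^ 2 ∧
    (∀ x ∈ Ioo (0 : ℝ) L,
      d1 * deriv (deriv (fun y : ℝ =>
          (1 - k1 * a - d1 * π ^ 2 / L ^ 2) * Real.sin (π * y / L))) x
        + ((1 - k1 * a - d1 * π ^ 2 / L ^ 2) * Real.sin (π * x / L)) *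
            (1 - (1 - k1 * a - d1 * π ^ 2 / L ^ 2) * Real.sin (π * x / L) - k1 * a) ≥ 0) ∧
    (1 - k1 * a - d1 * π ^ 2 / L ^ 2) * Real.sin (π * 0 / L) = 0 ∧
    (1 - k1 * a - d1 * π ^ 2 / L ^ 2) * Real.sin (π * L / L) = 0 ∧
    (∀ x ∈ Ioo (0 : ℝ) L,
      0 < (1 - k1 * a - d1 * π ^ 2 / L ^ 2) * Real.sin (π * x / L) ∧
      (1 - k1 * a - d1 * π ^ 2 / L ^ 2) * Real.sin (π * x / L) ≤ 1 - k1 * a) :=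
  subsolution_u_barrier_general L d1 a k1 hd1 hk1 hak1 hLgt
end

section
/- Let d > 0 and L > 0 with d·π²/L² ≥ 1, and let u : [0, L] → ℝ be a C² nonnegative function satisfying d u''(x) + u(x)(1 - u(x)) = 0 on (0, L) with u(0) = u(L) = 0. Then u ≡ 0. -/
open Real Set

open intervalIntegral MeasureTheory in
/-- Nonexistence of a nontrivial nonnegative Dirichlet solution of the
stationary logistic equation when diffusion dominates. -/
theorem logistic_nonexistence
    (L d : ℝ) (hL : 0 < L) (hd : 0 < d) (hdom : d * π ^ 2 / L ^ 2 ≥ 1)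
    (u : ℝ → ℝ) (hu : ContDiff ℝ 2 u)
    (heq : ∀ x ∈ Ioo (0 : ℝ) L, d * deriv (deriv u) x + u x * (1 - u x) = 0)
    (hb0 : u 0 = 0) (hbL : u L = 0)
    (hpos : ∀ x ∈ Icc (0 : ℝ) L, 0 ≤ u x) :
    ∀ x ∈ Icc (0 : ℝ) L, u x = 0 := by
  set c : ℝ := π / L with hc
  have hcpos : 0 < c := div_pos pi_pos hL
  set φ : ℝ → ℝ := fun x => Real.sin (c * x) with hφ
  set φ' : ℝ → ℝ := fun x => Real.cos (c * x) * c with hφ'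
  set φ'' : ℝ → ℝ := fun x => -(Real.sin (c * x) * (c * c)) with hφ''
  have hφd : ∀ x : ℝ, HasDerivAt φ (φ' x) x := by
    intro x
    exact ((Real.hasDerivAt_sin (c * x)).comp x ((hasDerivAt_id x).const_mul c)).congr_deriv (by simp [hφ'])
  have hφ'd : ∀ x : ℝ, HasDerivAt φ' (φ'' x) x := by
    intro x
    simpa [mul_assoc] using
      (((Real.hasDerivAt_cos (c * x)).comp x ((hasDerivAt_id x).const_mul c)).mul_const c)
  have hucont : Continuous u := hu.continuous
  have hu2 : ContDiff ℝ (1+1) u := by exact_mod_cast hu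
  have hu1 : ContDiff ℝ 1 (deriv u) := (contDiff_succ_iff_deriv.mp hu2).2.2
  have hu'cont : Continuous (deriv u) := hu1.continuous
  have hu''cont : Continuous (deriv (deriv u)) := hu1.continuous_deriv le_rfl
  have hud : ∀ x : ℝ, HasDerivAt u (deriv u x) x :=
    fun x => (hu.differentiable (by norm_num)).differentiableAt.hasDerivAt
  have hu'd : ∀ x : ℝ, HasDerivAt (deriv u) (deriv (deriv u) x) x :=
    fun x => (hu1.differentiable (by norm_num)).differentiableAt.hasDerivAt
  have hφcont : Continuous φ := by fun_prop
  have hφ'cont : Continuous φ' := by fun_prop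
  have hφ''cont : Continuous φ'' := by fun_prop
  have hφ0 : φ 0 = 0 := by simp [hφ]
  have hφL : φ L = 0 := by
    simp [hφ, hc, div_mul_cancel₀ _ hL.ne']
  -- first integration by parts
  have ibp1 : ∫ x in (0:ℝ)..L, deriv u x * φ' x
      = deriv u L * φ L - deriv u 0 * φ 0 - ∫ x in (0:ℝ)..L, deriv (deriv u) x * φ x := by
    exact integral_mul_deriv_eq_deriv_mul (fun x _ => hu'd x) (fun x _ => hφd x)
      (hu''cont.intervalIntegrable _ _) (hφ'cont.intervalIntegrable _ _)
  -- second integration by parts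
  have ibp2 : ∫ x in (0:ℝ)..L, u x * φ'' x
      = u L * φ' L - u 0 * φ' 0 - ∫ x in (0:ℝ)..L, deriv u x * φ' x := by
    exact integral_mul_deriv_eq_deriv_mul (fun x _ => hud x) (fun x _ => hφ'd x)
      (hu'cont.intervalIntegrable _ _) (hφ''cont.intervalIntegrable _ _)
  have key1 : ∫ x in (0:ℝ)..L, deriv (deriv u) x * φ x = ∫ x in (0:ℝ)..L, u x * φ'' x := by
    rw [ibp2, hb0, hbL]
    rw [hφ0, hφL] at ibp1
    linarith [ibp1]
  -- the PDE integrated against φ vanishes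
  have key2 : ∫ x in (0:ℝ)..L, (d * deriv (deriv u) x + u x * (1 - u x)) * φ x = 0 := by
    have : ∫ x in (0:ℝ)..L, (d * deriv (deriv u) x + u x * (1 - u x)) * φ x
        = ∫ x in (0:ℝ)..L, (0:ℝ) := by
      apply integral_congr
      intro x hx
      rw [uIcc_of_le hL.le] at hx
      rcases eq_or_lt_of_le hx.1 with h0 | h0
      · simp [← h0, hφ0]
      rcases eq_or_lt_of_le hx.2 with hL' | hL'
      · simp [hL', hφL]
      · simp [heq x ⟨h0, hL'⟩]
    simpa using this
  -- expand
  have hsplit : ∫ x in (0:ℝ)..L, (d * deriv (deriv u) x + u x * (1 - u x)) * φ x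
      = d * (∫ x in (0:ℝ)..L, deriv (deriv u) x * φ x)
        + ∫ x in (0:ℝ)..L, u x * (1 - u x) * φ x := by
    rw [← intervalIntegral.integral_const_mul, ← intervalIntegral.integral_add]
    · congr 1; ext x; ring
    · exact (Continuous.intervalIntegrable (by fun_prop) _ _)
    · exact (Continuous.intervalIntegrable (by fun_prop) _ _)
  have key3 : ∫ x in (0:ℝ)..L, (u x * (1 - u x) * φ x - d * c ^ 2 * (u x * φ x)) = 0 := by
    have h2 : ∫ x in (0:ℝ)..L, u x * φ'' x = ∫ x in (0:ℝ)..L, -c^2 * (u x * φ x) := by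
      congr 1; ext x; simp only [hφ'', hφ]; ring
    rw [intervalIntegral.integral_sub (Continuous.intervalIntegrable (by fun_prop) _ _)
      (Continuous.intervalIntegrable (by fun_prop) _ _)]
    have := key2
    rw [hsplit, key1, h2, intervalIntegral.integral_const_mul] at this
    rw [intervalIntegral.integral_const_mul]
    linarith [this]
  -- the nonnegative function u^2 * φ has zero integral
  have hK : 1 ≤ d * c ^ 2 := by
    have : d * c ^ 2 = d * π ^ 2 / L ^ 2 := by
      rw [hc]; field_simp
    rw [this]; exact hdom
  have hφnn : ∀ x ∈ Icc (0:ℝ) L, 0 ≤ φ x := by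
    intro x hx
    apply Real.sin_nonneg_of_nonneg_of_le_pi
    · exact mul_nonneg hcpos.le hx.1
    · calc c * x ≤ c * L := by nlinarith [hx.2]
        _ = π := by rw [hc]; field_simp
  have hmono : ∫ x in (0:ℝ)..L, u x ^ 2 * φ x
      ≤ ∫ x in (0:ℝ)..L, -(u x * (1 - u x) * φ x - d * c ^ 2 * (u x * φ x)) := by
    apply intervalIntegral.integral_mono_on hL.le
      (Continuous.intervalIntegrable (by fun_prop) _ _)
      (Continuous.intervalIntegrable (by fun_prop) _ _)
    intro x hx
    have h1 := hpos x hx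
    have h2 := hφnn x hx
    nlinarith [mul_nonneg h1 h2]
  have hzero : ∫ x in (0:ℝ)..L, u x ^ 2 * φ x = 0 := by
    have hge : 0 ≤ ∫ x in (0:ℝ)..L, u x ^ 2 * φ x := by
      apply intervalIntegral.integral_nonneg hL.le
      intro x hx
      exact mul_nonneg (sq_nonneg _) (hφnn x hx)
    have : ∫ x in (0:ℝ)..L, -(u x * (1 - u x) * φ x - d * c ^ 2 * (u x * φ x)) = 0 := by
      rw [intervalIntegral.integral_neg, key3, neg_zero]
    linarith [hmono]
  -- deduce pointwise vanishing
  have hae : (fun x => u x ^ 2 * φ x) =ᵐ[volume.restrict (Ioc 0 L)] 0 := by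
    rw [← intervalIntegral.integral_eq_zero_iff_of_le_of_nonneg_ae hL.le]
    · exact hzero
    · filter_upwards [MeasureTheory.ae_restrict_mem measurableSet_Ioc] with x hx
      exact mul_nonneg (sq_nonneg _) (hφnn x ⟨hx.1.le, hx.2⟩)
    · exact Continuous.intervalIntegrable (by fun_prop) _ _
  have hEqOn : EqOn (fun x => u x ^ 2 * φ x) 0 (Ioc 0 L) := by
    apply MeasureTheory.Measure.eqOn_of_ae_eq hae
      (Continuous.continuousOn (by fun_prop)) continuousOn_const
    rw [interior_Ioc, closure_Ioo (by exact hL.ne)]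
    exact Ioc_subset_Icc_self
  intro x hx
  rcases eq_or_lt_of_le hx.1 with h0 | h0
  · rw [← h0, hb0]
  rcases eq_or_lt_of_le hx.2 with hL' | hL'
  · rw [hL', hbL]
  have hphi : 0 < φ x := by
    apply Real.sin_pos_of_pos_of_lt_pi
    · exact mul_pos hcpos h0
    · calc c * x < c * L := by exact mul_lt_mul_of_pos_left hL' hcpos
        _ = π := by rw [hc]; field_simp
  have := hEqOn ⟨h0, hx.2⟩
  simp only [Pi.zero_apply] at this
  have hu2 : u x ^ 2 = 0 := by
    by_contra h
    exact h (by nlinarith [sq_nonneg (u x), hphi])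
  exact pow_eq_zero_iff (by norm_num) |>.mp hu2
end
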